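/- Let a, b ∈ ℝ, k ≥ 2, and let μ_1, …, μ_k > 0 with M = Σ_i μ_i. Let p_1, …, p_k ∈ ℝ², p_i = (x_i, y_i), be pairwise distinct and satisfy the anisotropic central configuration equations: for every i, a x_i = Σ_{j≠i} μ_j (x_i − x_j)/r_{ij}³ and b y_i = Σ_{j≠i} μ_j (y_i − y_j)/r_{ij}³, where r_{ij} = |p_i − p_j|. Suppose a > 0, let R = max_i |x_i|, and let ε be any real with 0 < ε < R/(k − 1). Then R − (k − 2) ε < M / (a ε²). Analogously, if b > 0 and R' = max_i |y_i|, then for every ε with 0 < ε < R'/(k − 1), R' − (k − 2) ε < M / (b ε²). -/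
import Mathlib


open Finset

abbrev E2 : Type := EuclideanSpace ℝ (Fin 2)

/-- The anisotropic central configuration equations for points `p_i = (x_i, y_i)`:
`a x_i = Σ_{j≠i} μ_j (x_i − x_j)/r_{ij}³` and `b y_i = Σ_{j≠i} μ_j (y_i − y_j)/r_{ij}³`. -/
def AnisoCC {k : ℕ} (a b : ℝ) (μ : Fin k → ℝ) (p : Fin k → E2) : Prop :=
  ∀ i, (a * p i 0 = ∑ j ∈ Finset.univ.filter (· ≠ i), μ j * (p i 0 - p j 0) / ‖p i - p j‖ ^ 3) ∧
       (b * p i 1 = ∑ j ∈ Finset.univ.filter (· ≠ i), μ j * (p i 1 - p j 1) / ‖p i - p j‖ ^ 3)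


open Finset

lemma coord_abs_le_norm (x : EuclideanSpace ℝ (Fin 2)) (c : Fin 2) : |x c| ≤ ‖x‖ := by
  rw [EuclideanSpace.norm_eq]
  have h1 : |x c| = Real.sqrt (‖x c‖ ^ 2) := by
    rw [Real.sqrt_sq_eq_abs]; simp
  rw [h1]
  apply Real.sqrt_le_sqrt
  exact Finset.single_le_sum (f := fun i => ‖x i‖ ^ 2) (fun i _ => by positivity) (Finset.mem_univ c)

lemma key14 (k : ℕ) (hk : 2 ≤ k) (a : ℝ) (ha : 0 < a) (μ : Fin k → ℝ) (hμ : ∀ i, 0 < μ i)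
    (f : Fin k → ℝ) (r : Fin k → Fin k → ℝ)
    (hr : ∀ i j, i ≠ j → 0 < r i j) (hrd : ∀ i j, i ≠ j → |f i - f j| ≤ r i j)
    (hcc : ∀ i, a * f i = ∑ j ∈ Finset.univ.filter (· ≠ i), μ j * (f i - f j) / r i j ^ 3)
    (R : ℝ) (i0 : Fin k) (hi0 : f i0 = R) (hub : ∀ i, f i ≤ R)
    (ε : ℝ) (hε : 0 < ε) (hεR : ε < R / ((k : ℝ) - 1)) :
    R - ((k : ℝ) - 2) * ε < (∑ i, μ i) / (a * ε ^ 2) := by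
  have hk2 : (2:ℝ) ≤ (k:ℝ) := by exact_mod_cast hk
  have hk1 : (0:ℝ) < (k:ℝ) - 1 := by linarith
  have hεk : ε * ((k:ℝ) - 1) < R := (lt_div_iff₀ hk1).mp hεR
  have hRk1 : 0 < R - ((k:ℝ)-1)*ε := by nlinarith
  set M := ∑ i, μ i with hM
  -- Sub-lemma B : a global minimum cannot have positive coordinate
  have hmin : ∀ i, (∀ j, f i ≤ f j) → ¬ (0 < f i) := by
    intro i hle hpos
    have hsum : ∑ j ∈ univ.filter (· ≠ i), μ j * (f i - f j) / r i j ^ 3 ≤ 0 := by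
      apply Finset.sum_nonpos
      intro j hj
      have hji : j ≠ i := by simpa using hj
      have hrp : 0 < r i j := hr i j hji.symm
      apply div_nonpos_of_nonpos_of_nonneg
      · exact mul_nonpos_of_nonneg_of_nonpos (hμ j).le (by linarith [hle j])
      · exact (pow_pos hrp 3).le
    have h := hcc i
    nlinarith [mul_pos ha hpos]
  -- Sub-lemma A : a "good" point has a bounded coordinate
  have hgood : ∀ i, (∀ j, f j ≤ f i - ε ∨ f i ≤ f j) → a * f i < M / ε ^ 2 := by
    intro i hg
    have hstep : a * f i ≤ ∑ j ∈ univ.filter (· ≠ i), μ j / ε ^ 2 := by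
      rw [hcc i]
      apply Finset.sum_le_sum
      intro j hj
      have hji : j ≠ i := by simpa using hj
      have hij : i ≠ j := hji.symm
      have hrp : 0 < r i j := hr i j hij
      rcases hg j with h | h
      · have ht : ε ≤ f i - f j := by linarith
        have htr : f i - f j ≤ r i j := le_trans (le_abs_self _) (hrd i j hij)
        rw [div_le_div_iff₀ (by positivity) ((pow_pos hε 2))]
        have e1 : ε^2 ≤ (f i - f j)^2 := by nlinarith
        have e2 : (f i - f j)^3 ≤ r i j ^ 3 := pow_le_pow_left₀ (by linarith) htr 3
        have e3 : (f i - f j) * ε^2 ≤ r i j ^ 3 := by nlinarith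
        nlinarith [mul_le_mul_of_nonneg_left e3 (hμ j).le]
      · have h1 : μ j * (f i - f j) / r i j ^ 3 ≤ 0 :=
          div_nonpos_of_nonpos_of_nonneg
            (mul_nonpos_of_nonneg_of_nonpos (hμ j).le (by linarith)) (pow_pos hrp 3).le
        have h2 : 0 ≤ μ j / ε ^ 2 := div_nonneg (hμ j).le (pow_pos hε 2).le
        linarith
    have hsum : ∑ j ∈ univ.filter (· ≠ i), μ j / ε ^ 2 = (M - μ i) / ε ^ 2 := by
      rw [Finset.filter_ne', Finset.sum_erase_eq_sub (Finset.mem_univ i),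
        ← Finset.sum_div, ← sub_div]
    have hlt : (M - μ i) / ε ^ 2 < M / ε ^ 2 := by
      rw [div_lt_div_iff₀ (pow_pos hε 2) (pow_pos hε 2)]
      nlinarith [hμ i, pow_pos hε 2]
    rw [hsum] at hstep
    linarith
  -- the chain induction
  have H : ∀ m : ℕ, m ≤ k - 2 →
      (∃ i, (∀ j, f j ≤ f i - ε ∨ f i ≤ f j) ∧ R - ((k:ℝ)-2)*ε ≤ f i) ∨
      (∃ i, ¬(∀ j, f j ≤ f i - ε ∨ f i ≤ f j) ∧ R - (m:ℝ)*ε ≤ f i ∧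
        m + 1 ≤ (Finset.univ.filter (fun j => f i ≤ f j)).card) := by
    intro m
    induction m with
    | zero =>
      intro _
      by_cases hg : ∀ j, f j ≤ f i0 - ε ∨ f i0 ≤ f j
      · left
        refine ⟨i0, hg, ?_⟩
        rw [hi0]
        nlinarith
      · right
        refine ⟨i0, hg, by rw [hi0]; norm_num, ?_⟩
        have hmem : i0 ∈ univ.filter (fun j => f i0 ≤ f j) := by simp
        simpa using Finset.card_pos.mpr ⟨i0, hmem⟩
    | succ m ih =>
      intro hm
      have hm' : m ≤ k - 2 := le_trans (Nat.le_succ m) hm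
      rcases ih hm' with h | ⟨i, hbad, hge, hcard⟩
      · left; exact h
      push_neg at hbad
      obtain ⟨j, hj1, hj2⟩ := hbad
      have hjnot : j ∉ univ.filter (fun l => f i ≤ f l) := by
        simp only [Finset.mem_filter, Finset.mem_univ, true_and, not_le]
        linarith
      by_cases hgj : ∀ l, f l ≤ f j - ε ∨ f j ≤ f l
      · left
        refine ⟨j, hgj, ?_⟩
        have hcast : ((m:ℝ)+1) ≤ (k:ℝ) - 2 := by
          have h2 : ((m+1:ℕ):ℝ) ≤ ((k-2:ℕ):ℝ) := by exact_mod_cast hm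
          rw [Nat.cast_sub hk] at h2
          push_cast at h2 ⊢
          linarith
        have hmul : ((m:ℝ)+1)*ε ≤ ((k:ℝ)-2)*ε := mul_le_mul_of_nonneg_right hcast hε.le
        linarith
      · right
        refine ⟨j, hgj, by push_cast; linarith, ?_⟩
        have hsub : insert j (univ.filter fun l => f i ≤ f l) ⊆
            univ.filter (fun l => f j ≤ f l) := by
          intro l hl
          simp only [Finset.mem_insert, Finset.mem_filter, Finset.mem_univ, true_and] at hl ⊢
          rcases hl with rfl | h
          · exact le_refl _
          · linarith
        calc m + 1 + 1 = (m + 1) + 1 := rfl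
          _ ≤ (univ.filter fun l => f i ≤ f l).card + 1 := by omega
          _ = (insert j (univ.filter fun l => f i ≤ f l)).card := by
              rw [Finset.card_insert_of_notMem hjnot]
          _ ≤ _ := Finset.card_le_card hsub
  have hcastk : ((k-2:ℕ):ℝ) = (k:ℝ) - 2 := by
    rw [Nat.cast_sub hk]; norm_num
  rcases H (k-2) (le_refl _) with ⟨i, hgi, hbound⟩ | ⟨i, hbad, hge, hcard⟩
  · have h1 := hgood i hgi
    have h2 : f i < M / ε ^ 2 / a := by
      rw [lt_div_iff₀ ha, mul_comm]; exact h1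
    have h3 : M / ε ^ 2 / a = M / (a * ε ^ 2) := by
      rw [div_div, mul_comm]
    linarith
  · exfalso
    push_neg at hbad
    obtain ⟨j, hj1, hj2⟩ := hbad
    have hjnot : j ∉ univ.filter (fun l => f i ≤ f l) := by
      simp only [Finset.mem_filter, Finset.mem_univ, true_and, not_le]
      linarith
    have hcard2 : k ≤ (insert j (univ.filter fun l => f i ≤ f l)).card := by
      rw [Finset.card_insert_of_notMem hjnot]; omega
    have huniv : insert j (univ.filter fun l => f i ≤ f l) = univ := by
      apply Finset.eq_univ_of_card
      have hle := Finset.card_le_univ (insert j (univ.filter fun l => f i ≤ f l))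
      simp only [Finset.card_univ, Fintype.card_fin] at hle ⊢
      omega
    have hcover : ∀ l, f j ≤ f l := by
      intro l
      have hl : l ∈ insert j (univ.filter fun l => f i ≤ f l) := by
        rw [huniv]; exact Finset.mem_univ l
      rcases Finset.mem_insert.mp hl with rfl | h
      · exact le_refl _
      · have := (Finset.mem_filter.mp h).2
        linarith
    have hjpos : 0 < f j := by
      rw [hcastk] at hge
      linarith
    exact hmin j hcover hjpos

lemma coord14 (k : ℕ) (hk : 2 ≤ k) (a : ℝ) (μ : Fin k → ℝ) (hμ : ∀ i, 0 < μ i)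
    (p : Fin k → E2) (hinj : Function.Injective p) (c : Fin 2)
    (hcc : ∀ i, a * p i c =
      ∑ j ∈ Finset.univ.filter (· ≠ i), μ j * (p i c - p j c) / ‖p i - p j‖ ^ 3)
    (ha : 0 < a) (R : ℝ) (hR : IsGreatest (Set.range fun i => |p i c|) R)
    (ε : ℝ) (hε : 0 < ε) (hεR : ε < R / ((k : ℝ) - 1)) :
    R - ((k : ℝ) - 2) * ε < (∑ i, μ i) / (a * ε ^ 2) := by
  obtain ⟨⟨i0, hi0⟩, hub⟩ := hR
  have hub' : ∀ i, |p i c| ≤ R := fun i => hub ⟨i, rfl⟩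
  have hr : ∀ i j : Fin k, i ≠ j → 0 < ‖p i - p j‖ := by
    intro i j hij
    rw [norm_pos_iff, sub_ne_zero]
    exact fun h => hij (hinj h)
  have habs : ∀ i j : Fin k, |p i c - p j c| ≤ ‖p i - p j‖ := by
    intro i j
    have h := coord_abs_le_norm (p i - p j) c
    simpa using h
  simp only at hi0
  rcases le_or_gt 0 (p i0 c) with hs | hs
  · refine key14 k hk a ha μ hμ (fun i => p i c) (fun i j => ‖p i - p j‖) hr
      (fun i j _ => habs i j) hcc R i0 ?_ (fun i => le_trans (le_abs_self _) (hub' i)) ε hε hεR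
    rw [← hi0, abs_of_nonneg hs]
  · refine key14 k hk a ha μ hμ (fun i => -(p i c)) (fun i j => ‖p i - p j‖) hr ?_ ?_ R i0 ?_
      (fun i => le_trans (neg_le_abs _) (hub' i)) ε hε hεR
    · intro i j hij
      have h := habs i j
      calc |(-(p i c)) - (-(p j c))| = |p i c - p j c| := by
            rw [show -(p i c) - -(p j c) = -(p i c - p j c) by ring, abs_neg]
        _ ≤ _ := h
    · intro i
      have h := hcc i
      have hs2 : (∑ j ∈ Finset.univ.filter (· ≠ i),
            μ j * (-(p i c) - -(p j c)) / ‖p i - p j‖ ^ 3)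
          = ∑ j ∈ Finset.univ.filter (· ≠ i),
            -(μ j * (p i c - p j c) / ‖p i - p j‖ ^ 3) :=
        Finset.sum_congr rfl (fun j _ => by ring)
      rw [hs2, Finset.sum_neg_distrib, ← h]
      ring
    · rw [← hi0, abs_of_neg hs]

/-- for an anisotropic central configuration with total mass `M = Σ μ_i`,
if `a > 0`, `R = max_i |x_i|` and `0 < ε < R/(k−1)`, then `R − (k−2)ε < M/(aε²)`;
analogously for `b` and the `y`-coordinates. -/
theorem stmt14 (k : ℕ) (hk : 2 ≤ k) (a b : ℝ) (μ : Fin k → ℝ) (hμ : ∀ i, 0 < μ i)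
    (p : Fin k → E2) (hinj : Function.Injective p) (hcc : AnisoCC a b μ p) :
    (0 < a → ∀ R : ℝ, IsGreatest (Set.range fun i => |p i 0|) R →
      ∀ ε : ℝ, 0 < ε → ε < R / ((k : ℝ) - 1) →
        R - ((k : ℝ) - 2) * ε < (∑ i, μ i) / (a * ε ^ 2)) ∧
    (0 < b → ∀ R : ℝ, IsGreatest (Set.range fun i => |p i 1|) R →
      ∀ ε : ℝ, 0 < ε → ε < R / ((k : ℝ) - 1) →
        R - ((k : ℝ) - 2) * ε < (∑ i, μ i) / (b * ε ^ 2)) := by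
  constructor
  · intro ha R hR ε hε hεR
    exact coord14 k hk a μ hμ p hinj 0 (fun i => (hcc i).1) ha R hR ε hε hεR
  · intro hb R hR ε hε hεR
    exact coord14 k hk b μ hμ p hinj 1 (fun i => (hcc i).2) hb R hR ε hε hεR
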